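/- arXiv:2107.10128 — 3 statements merged into one kernel-verified Lean document; each statement's English description precedes it below -/
import Mathlib

section
/- The L-structure F²_ℝ, whose universe is the set of all lines in the Euclidean plane with the binary relation O interpreted as perpendicularity of lines, is a model of the theory SAPP. -/
/-! Perpendicularity of lines in the plane is decided by directions alone: `a ⟂ b` iff the
direction of `b` is the orthogonal complement of that of `a`, both being one-dimensional in a
two-dimensional space. This gives λ₃–λ₆ at once. The two infinitary axioms are counting
arguments: the lines perpendicular to a given line are all the translates of one line, an
infinite family, and there are infinitely many directions, of which finitely many lines exclude
only finitely many. -/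

open FirstOrder Language Structure BoundedFormula

/-- The relation symbols of the language `L`: a single binary relation `O`. -/
inductive PerpRel : ℕ → Type
  | o : PerpRel 2

/-- The first-order language with a single binary relation symbol `O`. -/
def L : Language := ⟨fun _ => Empty, PerpRel⟩
  deriving IsRelational

/-- The binary relation symbol `O` of `L`. -/
abbrev oSym : L.Relations 2 := .o

/-- `O(xᵢ, xⱼ)` as a bounded formula. -/
def oBF {n : ℕ} (i j : Fin n) : L.BoundedFormula Empty n :=
  oSym.boundedFormula₂ (&i) (&j)

/-- Finite conjunction of a list of bounded formulas. -/
def andAll {n : ℕ} : List (L.BoundedFormula Empty n) → L.BoundedFormula Empty n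
  | [] => ⊤
  | φ :: l => φ ⊓ andAll l

/-- λ₁ₙ : ∀y₁…∀yₙ∀s(O(s,y₁) ∧ … ∧ O(s,yₙ) → ∃t(t ≠ y₁ ∧ … ∧ t ≠ yₙ ∧ O(s,t))).
Variables: y₁,…,yₙ are de Bruijn indices 0,…,n-1, s is index n, t is index n+1. -/
def lam1 (n : ℕ) : L.Sentence :=
  ((andAll ((List.finRange n).map fun i => oBF (Fin.last n) i.castSucc)).imp
    ((andAll ((List.finRange n).map fun i =>
        ∼((&(Fin.last (n + 1))) =' (&(i.castSucc.castSucc)))) ⊓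
      oBF ((Fin.last n).castSucc) (Fin.last (n + 1))).ex)).alls

/-- λ₂ₙ : ∀y₁…∀yₙ∃s(¬O(s,y₁) ∧ … ∧ ¬O(s,yₙ)).
Variables: y₁,…,yₙ are de Bruijn indices 0,…,n-1, s is index n. -/
def lam2 (n : ℕ) : L.Sentence :=
  ((andAll ((List.finRange n).map fun i => ∼(oBF (Fin.last n) i.castSucc))).ex).alls

/-- λ₃ : ∀x ¬O(x,x). -/
def lam3 : L.Sentence := (∼(oBF (0 : Fin 1) 0)).alls

/-- λ₄ : ∀x∀y(O(x,y) → O(y,x)). -/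
def lam4 : L.Sentence := ((oBF (0 : Fin 2) 1).imp (oBF (1 : Fin 2) 0)).alls

/-- λ₅ : ∀x∃y O(x,y). -/
def lam5 : L.Sentence := ((oBF (0 : Fin 2) 1).ex).alls

/-- λ₆ : ∀x∀y∀z∀t(O(x,z) ∧ O(y,z) ∧ O(x,t) → O(y,t)). -/
def lam6 : L.Sentence :=
  ((oBF (0 : Fin 4) 2 ⊓ oBF (1 : Fin 4) 2 ⊓ oBF (0 : Fin 4) 3).imp (oBF (1 : Fin 4) 3)).alls

/-- The theory SAPP. -/
def SAPP : L.Theory :=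
  {φ | ∃ n, 1 ≤ n ∧ φ = lam1 n} ∪ {φ | ∃ n, 2 ≤ n ∧ φ = lam2 n} ∪ {lam3, lam4, lam5, lam6}

/-- The Euclidean plane ℝ². -/
abbrev Plane := EuclideanSpace ℝ (Fin 2)

/-- A line in the Euclidean plane: a one-dimensional affine subspace of ℝ². -/
structure Line where
  carrier : AffineSubspace ℝ Plane
  one_dim : Module.finrank ℝ carrier.direction = 1

/-- Two lines are perpendicular iff their direction subspaces are orthogonal. -/
def Line.Perp (a b : Line) : Prop :=
  a.carrier.direction ⟂ b.carrier.direction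

/-- The structure F²_ℝ of all lines in the Euclidean plane, with `O` interpreted
as perpendicularity. -/
instance : L.Structure Line where
  RelMap | .o => fun x => Line.Perp (x 0) (x 1)

open Module

lemma forall_snoc_pi {α : Type*} {n : ℕ} {P : (Fin (n + 1) → α) → Prop} :
    (∀ xs, P xs) ↔ ∀ (a : α) (xs : Fin n → α), P (Fin.snoc xs a) :=
  ⟨fun h _ _ => h _, fun h xs => by simpa using h (xs (Fin.last n)) (Fin.init xs)⟩

section Decoding

variable {M : Type*} [L.Structure M]

def oRel (x y : M) : Prop := RelMap oSym ![x, y]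

@[simp] lemma realize_oBF {n : ℕ} {i j : Fin n} {v : Empty → M} {xs : Fin n → M} :
    (oBF i j).Realize v xs ↔ oRel (xs i) (xs j) := by
  simp [oBF, oRel]

lemma realize_andAll_map_finRange {n k : ℕ} {φ : Fin k → L.BoundedFormula Empty n}
    {v : Empty → M} {xs : Fin n → M} :
    (andAll ((List.finRange k).map φ)).Realize v xs ↔ ∀ i, (φ i).Realize v xs := by
  suffices ∀ l : List (L.BoundedFormula Empty n),
      (andAll l).Realize v xs ↔ ∀ ψ ∈ l, ψ.Realize v xs by simp [this]
  intro l
  induction l with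
  | nil => simp [andAll]
  | cons ψ l ih => simp [andAll, ih]

lemma model_lam1_iff (n : ℕ) :
    M ⊨ lam1 n ↔ ∀ (s : M) (ys : Fin n → M),
      (∀ i, oRel s (ys i)) → ∃ t, (∀ i, t ≠ ys i) ∧ oRel s t := by
  simp [lam1, Sentence.Realize, realize_andAll_map_finRange, forall_snoc_pi]

lemma model_lam2_iff (n : ℕ) :
    M ⊨ lam2 n ↔ ∀ ys : Fin n → M, ∃ s, ∀ i, ¬ oRel s (ys i) := by
  simp [lam2, Sentence.Realize, realize_andAll_map_finRange]

lemma model_lam3_iff : M ⊨ lam3 ↔ ∀ x : M, ¬ oRel x x := by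
  simp [lam3, Sentence.Realize, Fin.forall_fin_succ_pi]

lemma model_lam4_iff : M ⊨ lam4 ↔ ∀ x y : M, oRel x y → oRel y x := by
  simp [lam4, Sentence.Realize, Fin.forall_fin_succ_pi]

lemma model_lam5_iff : M ⊨ lam5 ↔ ∀ x : M, ∃ y, oRel x y := by
  simp [lam5, Sentence.Realize, Fin.forall_fin_succ_pi, Fin.snoc]

lemma model_lam6_iff : M ⊨ lam6 ↔
    ∀ x y z t : M, oRel x z → oRel y z → oRel x t → oRel y t := by
  simp only [Sentence.Realize, lam6, realize_alls, realize_imp, realize_inf, realize_oBF, and_imp,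
    Fin.forall_fin_succ_pi, Fin.forall_fin_zero_pi]
  exact Iff.rfl

end Decoding

lemma AffineSubspace.mk'_smul_injective {K V : Type*} [Field K] [AddCommGroup V] [Module K V]
    {D : Submodule K V} {w : V} (hw : w ∉ D) :
    Function.Injective fun c : K => AffineSubspace.mk' (c • w) D := by
  intro c c' (h : AffineSubspace.mk' (c • w) D = AffineSubspace.mk' (c' • w) D)
  have hmem : c • w -ᵥ c' • w ∈ D := by
    rw [← AffineSubspace.mem_mk', ← h]
    exact AffineSubspace.self_mem_mk' _ _
  rw [vsub_eq_sub, ← sub_smul] at hmem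
  by_contra hne
  exact hw ((D.smul_mem_iff (sub_ne_zero.mpr hne)).mp hmem)

noncomputable def slopeVec (c : ℝ) : Plane := !₂[1, c]

lemma injective_span_slopeVec : Function.Injective fun c => Submodule.span ℝ {slopeVec c} := by
  intro c c' (h : Submodule.span ℝ {slopeVec c} = Submodule.span ℝ {slopeVec c'})
  have hc' : slopeVec c' ∈ Submodule.span ℝ {slopeVec c} :=
    h ▸ Submodule.mem_span_singleton_self _
  obtain ⟨k, hk⟩ := Submodule.mem_span_singleton.mp hc'
  have h0 := congrArg (· 0) hk
  have h1 := congrArg (· 1) hk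
  simp [slopeVec] at h0 h1
  rw [← h1, h0, one_mul]

lemma infinite_setOf_finrank_eq_one : {D : Submodule ℝ Plane | finrank ℝ D = 1}.Infinite := by
  refine Set.infinite_of_injective_forall_mem injective_span_slopeVec fun c => ?_
  exact finrank_span_singleton fun h => by simpa [slopeVec] using congrArg (· 0) h

namespace Line

lemma finrank_direction_orthogonal (a : Line) : finrank ℝ a.carrier.directionᗮ = 1 :=
  Submodule.finrank_add_finrank_orthogonal' (by simp [a.one_dim])

lemma direction_ne_bot (a : Line) : a.carrier.direction ≠ ⊥ :=
  Submodule.finrank_eq_zero.not.mp (a.one_dim ▸ one_ne_zero)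

noncomputable def mk' (p : Plane) (D : Submodule ℝ Plane) (hD : finrank ℝ D = 1) : Line :=
  ⟨AffineSubspace.mk' p D, by rwa [AffineSubspace.direction_mk']⟩

@[simp] lemma direction_mk' (p : Plane) (D : Submodule ℝ Plane) (hD : finrank ℝ D = 1) :
    (mk' p D hD).carrier.direction = D :=
  AffineSubspace.direction_mk' p D

lemma perp_iff_direction_eq_orthogonal {a b : Line} :
    a.Perp b ↔ b.carrier.direction = a.carrier.directionᗮ := by
  refine ⟨fun h => Submodule.eq_of_le_of_finrank_eq (Submodule.isOrtho_iff_le.mp h.symm) ?_,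
    fun h => by rw [Line.Perp, h]; exact Submodule.isOrtho_orthogonal_right _⟩
  rw [b.one_dim, a.finrank_direction_orthogonal]

lemma not_perp_self (a : Line) : ¬ a.Perp a :=
  fun h => a.direction_ne_bot (Submodule.isOrtho_self.mp h)

lemma Perp.symm {a b : Line} (h : a.Perp b) : b.Perp a :=
  Submodule.IsOrtho.symm h

lemma exists_perp (a : Line) : ∃ b, a.Perp b :=
  ⟨mk' 0 _ a.finrank_direction_orthogonal, by simp [perp_iff_direction_eq_orthogonal]⟩

lemma Perp.perp_of_perp_of_perp {x y z t : Line} (hxz : x.Perp z) (hyz : y.Perp z)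
    (hxt : x.Perp t) : y.Perp t := by
  have hxy : x.carrier.direction = y.carrier.direction := by
    rw [perp_iff_direction_eq_orthogonal.mp hxz.symm, perp_iff_direction_eq_orthogonal.mp hyz.symm]
  rw [Line.Perp, ← hxy]
  exact hxt

lemma infinite_setOf_perp (s : Line) : {t | s.Perp t}.Infinite := by
  obtain ⟨w, hw, hw0⟩ := Submodule.exists_mem_ne_zero_of_ne_bot s.direction_ne_bot
  have hw' : w ∉ s.carrier.directionᗮ := fun h =>
    hw0 ((Submodule.mem_bot ℝ).mp (s.carrier.direction.inf_orthogonal_eq_bot ▸ ⟨hw, h⟩))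
  refine Set.infinite_of_injective_forall_mem
    (f := fun c : ℝ => mk' (c • w) _ s.finrank_direction_orthogonal) ?_ fun c => ?_
  · exact fun c c' h => AffineSubspace.mk'_smul_injective hw' (congrArg Line.carrier h)
  · simp [perp_iff_direction_eq_orthogonal]

lemma exists_not_perp_of_finite {S : Set Line} (hS : S.Finite) :
    ∃ s : Line, ∀ y ∈ S, ¬ s.Perp y := by
  obtain ⟨D, hD, hDS⟩ :=
    (infinite_setOf_finrank_eq_one.sdiff (hS.image fun y : Line => y.carrier.directionᗮ)).nonempty
  refine ⟨mk' 0 D hD, fun y hy hperp => hDS ⟨y, hy, ?_⟩⟩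
  simpa using (perp_iff_direction_eq_orthogonal.mp hperp.symm).symm

end Line

/-- F²_ℝ, the structure of all lines in the Euclidean plane with O interpreted
as perpendicularity, is a model of SAPP. -/
theorem statement_0 : Line ⊨ SAPP := by
  rw [Theory.model_iff]
  simp only [SAPP, Set.mem_union, Set.mem_ofPred_eq, Set.mem_insert_iff, Set.mem_singleton_iff]
  rintro φ (((⟨n, -, rfl⟩ | ⟨n, -, rfl⟩) | rfl | rfl | rfl | rfl))
  · rw [model_lam1_iff]
    intro s ys _
    obtain ⟨t, ht, hts⟩ := (s.infinite_setOf_perp.sdiff (Set.finite_range ys)).nonempty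
    exact ⟨t, fun i h => hts ⟨i, h.symm⟩, ht⟩
  · rw [model_lam2_iff]
    intro ys
    obtain ⟨s, hs⟩ := Line.exists_not_perp_of_finite (Set.finite_range ys)
    exact ⟨s, fun i => hs _ ⟨i, rfl⟩⟩
  · exact model_lam3_iff.mpr Line.not_perp_self
  · exact model_lam4_iff.mpr fun _ _ => Line.Perp.symm
  · exact model_lam5_iff.mpr Line.exists_perp
  · exact model_lam6_iff.mpr fun _ _ _ _ => Line.Perp.perp_of_perp_of_perp
end

section
/- There is no L-formula φ(x,y,z) with three free variables such that for all lines a, b, c in the Euclidean plane: the lines a, b, c pass through a common point if and only if F²_ℝ ⊨ φ[a,b,c]. (The ternary co-punctuality relation ρ is not definable from O and = in the structure of lines of the Euclidean plane.) -/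
open FirstOrder Language Structure BoundedFormula

/-!
Perpendicularity only sees the directions of lines. Hence translating all lines of one direction
(here the diagonal ones) by a fixed vector, while fixing every other line, is an automorphism of
`F²_ℝ`, and automorphisms preserve every definable relation. But the two coordinate axes and the
diagonal meet at the origin, while the axes and the diagonal moved by `(1, 0)` have no common point.
-/

open Pointwise

theorem FirstOrder.Language.Formula.not_defines_of_equiv {L : Language} {M α : Type*}
    [L.Structure M] {R : (α → M) → Prop} (g : M ≃[L] M) {v : α → M} (hv : R v)
    (hgv : ¬ R (g ∘ v)) : ¬ ∃ φ : L.Formula α, ∀ w, R w ↔ φ.Realize w := by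
  rintro ⟨φ, hφ⟩
  exact hgv ((hφ _).2 ((StrongHomClass.realize_formula g φ).2 ((hφ v).1 hv)))

theorem span_singleton_ne_of_cross_ne_zero {v w : Plane}
    (h : v 0 * w 1 - v 1 * w 0 ≠ 0) : ℝ ∙ v ≠ ℝ ∙ w := by
  intro hvw
  obtain ⟨t, rfl⟩ := Submodule.mem_span_singleton.1 (hvw ▸ Submodule.mem_span_singleton_self w)
  apply h
  simp only [PiLp.smul_apply, smul_eq_mul]
  ring

namespace Line

theorem carrier_injective : Function.Injective Line.carrier := by
  rintro ⟨a, _⟩ ⟨b, _⟩ rfl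
  rfl

noncomputable instance : AddAction Plane Line where
  vadd w ℓ := ⟨w +ᵥ ℓ.carrier, by rw [AffineSubspace.pointwise_vadd_direction]; exact ℓ.one_dim⟩
  zero_vadd ℓ := carrier_injective (zero_vadd Plane ℓ.carrier)
  add_vadd v w ℓ := carrier_injective (add_vadd v w ℓ.carrier)

theorem direction_vadd (w : Plane) (ℓ : Line) :
    (w +ᵥ ℓ).carrier.direction = ℓ.carrier.direction :=
  AffineSubspace.pointwise_vadd_direction w ℓ.carrier

theorem mem_vadd_iff {w x : Plane} {ℓ : Line} : x ∈ (w +ᵥ ℓ).carrier ↔ -w +ᵥ x ∈ ℓ.carrier :=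
  Set.mem_vadd_set_iff_neg_vadd_mem

open Classical in
noncomputable def translateDirection (V : Submodule ℝ Plane) (w : Plane) (ℓ : Line) : Line :=
  if ℓ.carrier.direction = V then w +ᵥ ℓ else ℓ

theorem direction_translateDirection (V : Submodule ℝ Plane) (w : Plane) (ℓ : Line) :
    (translateDirection V w ℓ).carrier.direction = ℓ.carrier.direction := by
  unfold translateDirection
  split_ifs
  · exact direction_vadd w ℓ
  · rfl

theorem translateDirection_neg_translateDirection (V : Submodule ℝ Plane) (w : Plane)
    (ℓ : Line) : translateDirection V (-w) (translateDirection V w ℓ) = ℓ := by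
  by_cases h : ℓ.carrier.direction = V
  · simp [translateDirection, h, direction_vadd]
  · simp [translateDirection, h]

def perpEquivOfDirection (f : Line ≃ Line)
    (hf : ∀ ℓ, (f ℓ).carrier.direction = ℓ.carrier.direction) : Line ≃[L] Line where
  toEquiv := f
  map_fun' := fun {_} F => isEmptyElim F
  map_rel' := by
    rintro _ ⟨⟩ x
    show Perp (f (x 0)) (f (x 1)) ↔ Perp (x 0) (x 1)
    rw [Perp, Perp, hf, hf]

noncomputable def translateDirectionEquiv (V : Submodule ℝ Plane) (w : Plane) :
    Line ≃[L] Line :=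
  perpEquivOfDirection
    { toFun := translateDirection V w
      invFun := translateDirection V (-w)
      left_inv := translateDirection_neg_translateDirection V w
      right_inv := fun ℓ => by
        simpa using translateDirection_neg_translateDirection V (-w) ℓ }
    (direction_translateDirection V w)

theorem translateDirectionEquiv_apply (V : Submodule ℝ Plane) (w : Plane) (ℓ : Line) :
    translateDirectionEquiv V w ℓ = translateDirection V w ℓ :=
  rfl

noncomputable def through (p v : Plane) (hv : v ≠ 0) : Line :=
  ⟨AffineSubspace.mk' p (ℝ ∙ v), by
    rw [AffineSubspace.direction_mk']; exact finrank_span_singleton hv⟩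

theorem direction_through (p v : Plane) (hv : v ≠ 0) :
    (through p v hv).carrier.direction = ℝ ∙ v :=
  AffineSubspace.direction_mk' p _

theorem mem_through {p v : Plane} {hv : v ≠ 0} {x : Plane} :
    x ∈ (through p v hv).carrier ↔ ∃ t : ℝ, t • v = x - p := by
  simp [through, AffineSubspace.mem_mk', Submodule.mem_span_singleton, vsub_eq_sub]

noncomputable def xAxis : Line := through 0 !₂[1, 0] (by simp)

noncomputable def yAxis : Line := through 0 !₂[0, 1] (by simp)

noncomputable def diagonal : Line := through 0 !₂[1, 1] (by simp)

theorem zero_mem_xAxis : (0 : Plane) ∈ xAxis.carrier := mem_through.2 ⟨0, by simp⟩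

theorem zero_mem_yAxis : (0 : Plane) ∈ yAxis.carrier := mem_through.2 ⟨0, by simp⟩

theorem zero_mem_diagonal : (0 : Plane) ∈ diagonal.carrier := mem_through.2 ⟨0, by simp⟩

theorem direction_xAxis_ne_diagonal : xAxis.carrier.direction ≠ diagonal.carrier.direction := by
  rw [xAxis, diagonal, direction_through, direction_through]
  exact span_singleton_ne_of_cross_ne_zero (by simp)

theorem direction_yAxis_ne_diagonal : yAxis.carrier.direction ≠ diagonal.carrier.direction := by
  rw [yAxis, diagonal, direction_through, direction_through]
  exact span_singleton_ne_of_cross_ne_zero (by simp)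

theorem not_copunctual_xAxis_yAxis_vadd_diagonal :
    ¬ ∃ p : Plane, p ∈ xAxis.carrier ∧ p ∈ yAxis.carrier ∧
      p ∈ ((!₂[1, 0] : Plane) +ᵥ diagonal).carrier := by
  rintro ⟨p, hx, hy, hd⟩
  obtain ⟨s, hs⟩ := mem_through.1 hx
  obtain ⟨u, hu⟩ := mem_through.1 hy
  obtain ⟨t, ht⟩ := mem_through.1 (mem_vadd_iff.1 hd)
  have h0 := congrFun (congrArg (⇑) ht) 0
  have h1 := congrFun (congrArg (⇑) ht) 1
  have hp0 := congrFun (congrArg (⇑) hu) 0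
  have hp1 := congrFun (congrArg (⇑) hs) 1
  simp only [PiLp.smul_apply, PiLp.add_apply, PiLp.neg_apply, PiLp.sub_apply, vadd_eq_add,
    Matrix.cons_val_zero, Matrix.cons_val_one, Matrix.cons_val_fin_one, smul_eq_mul] at h0 h1 hp0 hp1
  linarith

end Line

open Line

/-- co-punctuality of three lines is not definable by any L-formula in the
structure of lines of the Euclidean plane. -/
theorem statement_8 :
    ¬ ∃ φ : L.Formula (Fin 3), ∀ a b c : Line,
      ((∃ p : Plane, p ∈ a.carrier ∧ p ∈ b.carrier ∧ p ∈ c.carrier) ↔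
        φ.Realize ![a, b, c]) := by
  rintro ⟨φ, hφ⟩
  let g := translateDirectionEquiv diagonal.carrier.direction (!₂[1, 0] : Plane)
  have hg : g ∘ ![xAxis, yAxis, diagonal] = ![xAxis, yAxis, (!₂[1, 0] : Plane) +ᵥ diagonal] := by
    ext i : 1
    fin_cases i <;>
      simp [g, translateDirectionEquiv_apply, translateDirection,
        direction_xAxis_ne_diagonal, direction_yAxis_ne_diagonal]
  refine Formula.not_defines_of_equiv (R := fun v : Fin 3 → Line =>
      ∃ p : Plane, p ∈ (v 0).carrier ∧ p ∈ (v 1).carrier ∧ p ∈ (v 2).carrier) g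
    (v := ![xAxis, yAxis, diagonal]) ⟨0, zero_mem_xAxis, zero_mem_yAxis, zero_mem_diagonal⟩
    ?_ ⟨φ, fun v => ?_⟩
  · rw [hg]
    exact not_copunctual_xAxis_yAxis_vadd_diagonal
  · have hv : ![v 0, v 1, v 2] = v := by simp [← List.ofFn_inj]
    rw [hφ, hv]
end

section
/- For all lines a, b in the Euclidean plane: a and b intersect in exactly one point (i.e., their intersection is a singleton) if and only if there exists a line z in the Euclidean plane such that z is perpendicular to a and z is not perpendicular to b. (The convergence predicate C is definable from O and =.) -/
lemma plane_finrank : Module.finrank ℝ Plane = 2 := by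
  simp [finrank_euclideanSpace]

lemma line_nonempty (a : Line) : ((a.carrier : Set Plane)).Nonempty := by
  rcases eq_or_ne a.carrier ⊥ with h | h
  · exfalso
    have := a.one_dim
    rw [h, AffineSubspace.direction_bot] at this
    simp at this
  · exact (AffineSubspace.nonempty_iff_ne_bot _).mpr h

lemma eq_of_le_dir {U V : Submodule ℝ Plane} (h : U ≤ V)
    (hU : Module.finrank ℝ U = 1) (hV : Module.finrank ℝ V = 1) : U = V :=
  Submodule.eq_of_le_of_finrank_eq h (hU.trans hV.symm)

lemma isCompl_of_ne (a b : Line) (h : a.carrier.direction ≠ b.carrier.direction) :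
    IsCompl a.carrier.direction b.carrier.direction := by
  have hinf : a.carrier.direction ⊓ b.carrier.direction = ⊥ := by
    by_contra hbot
    have h1 : Module.finrank ℝ ↥(a.carrier.direction ⊓ b.carrier.direction) = 1 := by
      have hle : 1 ≤ Module.finrank ℝ ↥(a.carrier.direction ⊓ b.carrier.direction) :=
        Submodule.one_le_finrank_iff.mpr hbot
      have h2 : Module.finrank ℝ ↥(a.carrier.direction ⊓ b.carrier.direction) ≤ 1 := by
        simpa [a.one_dim] using Submodule.finrank_mono
          (inf_le_left : a.carrier.direction ⊓ b.carrier.direction ≤ a.carrier.direction)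
      omega
    exact h ((eq_of_le_dir inf_le_left h1 a.one_dim).symm.trans
      (eq_of_le_dir inf_le_right h1 b.one_dim))
  have hsup : a.carrier.direction ⊔ b.carrier.direction = ⊤ := by
    apply Submodule.eq_top_of_finrank_eq
    have := Submodule.finrank_sup_add_finrank_inf_eq a.carrier.direction b.carrier.direction
    rw [hinf] at this
    simp [a.one_dim, b.one_dim, plane_finrank] at this ⊢
    omega
  exact ⟨disjoint_iff.mpr hinf, codisjoint_iff.mpr hsup⟩

/-- two lines intersect in exactly one point iff there is a line perpendicular
to the first and not perpendicular to the second. -/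
theorem statement_10 (a b : Line) :
    (∃ p : Plane, (a.carrier : Set Plane) ∩ (b.carrier : Set Plane) = {p}) ↔
      (∃ z : Line, z.Perp a ∧ ¬ z.Perp b) := by
  have key : (∃ p : Plane, (a.carrier : Set Plane) ∩ (b.carrier : Set Plane) = {p}) ↔
      a.carrier.direction ≠ b.carrier.direction := by
    constructor
    · rintro ⟨p, hp⟩ heq
      have hpa : p ∈ a.carrier := by
        have : p ∈ (a.carrier : Set Plane) ∩ (b.carrier : Set Plane) := hp ▸ rfl
        exact this.1
      have hpb : p ∈ b.carrier := by
        have : p ∈ (a.carrier : Set Plane) ∩ (b.carrier : Set Plane) := hp ▸ rfl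
        exact this.2
      obtain ⟨v, hv, hv0⟩ : ∃ v ∈ a.carrier.direction, v ≠ 0 := by
        by_contra hc
        push_neg at hc
        have : a.carrier.direction = ⊥ := by
          ext x; simp only [Submodule.mem_bot]
          exact ⟨fun hx => hc x hx, fun hx => hx ▸ (Submodule.zero_mem _)⟩
        have h1 := a.one_dim
        rw [this] at h1
        simp at h1
      have h1 : v +ᵥ p ∈ a.carrier := AffineSubspace.vadd_mem_of_mem_direction hv hpa
      have h2 : v +ᵥ p ∈ b.carrier :=
        AffineSubspace.vadd_mem_of_mem_direction (heq ▸ hv) hpb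
      have : v +ᵥ p ∈ ({p} : Set Plane) := hp ▸ ⟨h1, h2⟩
      have : v +ᵥ p = p := this
      apply hv0
      simpa using this
    · intro hne
      exact AffineSubspace.inter_eq_singleton_of_nonempty_of_isCompl
        (line_nonempty a) (line_nonempty b) (isCompl_of_ne a b hne)
  rw [key]
  constructor
  · intro hne
    have hfin : Module.finrank ℝ (a.carrier.direction)ᗮ = 1 := by
      have := Submodule.finrank_add_finrank_orthogonal a.carrier.direction
      rw [a.one_dim, plane_finrank] at this
      omega
    refine ⟨⟨(a.carrier.direction)ᗮ.toAffineSubspace, by rwa [Submodule.toAffineSubspace_direction]⟩,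
      ?_, ?_⟩
    · show _ ⟂ _
      rw [Submodule.toAffineSubspace_direction]
      exact Submodule.isOrtho_orthogonal_left _
    · show ¬ _ ⟂ _
      rw [Submodule.toAffineSubspace_direction]
      intro hperp
      apply hne
      have hle : b.carrier.direction ≤ (a.carrier.direction)ᗮᗮ := hperp.symm.le
      rw [Submodule.orthogonal_orthogonal] at hle
      exact (eq_of_le_dir hle b.one_dim a.one_dim).symm
  · rintro ⟨z, hza, hzb⟩ heq
    apply hzb
    unfold Line.Perp at hza ⊢
    rwa [← heq]
end
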